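/- Let μ be a Borel probability measure on ℝ^d absolutely continuous with respect to Lebesgue measure, let X_1,…,X_n be i.i.d. with law μ, let h_1,…,h_n be n distinct points of [0,1]^d, and let σ̂ be a measurable random permutation of {1,…,n} that is almost surely an optimal assignment of (X_1,…,X_n) to (h_1,…,h_n). Then σ̂ is uniformly distributed over the n! permutations of {1,…,n}; equivalently, the vector of empirical ranks (h_{σ̂(1)},…,h_{σ̂(n)}) is uniformly distributed over the n! orderings of {h_1,…,h_n}, and in particular its law does not depend on μ. -/

import Mathlib

/-!
For distinct targets `h`, the difference of the costs of two assignments `σ ≠ τ` is a nonzero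
linear function of the sample, because the terms `‖h (σ i)‖²` cancel. Hence, under a law
absolutely continuous with respect to Lebesgue measure, ties occur with probability zero, and
almost surely the optimal assignment is unique. Permuting the i.i.d. sample by `τ` preserves its
law and turns the region where `σ` is the unique optimum into the region of `σ * τ⁻¹`, so these
`n!` regions, which partition the sample space up to a null set, have equal probability.
-/

open MeasureTheory ProbabilityTheory Filter Topology
open scoped ENNReal NNReal

noncomputable section

abbrev Euc (d : ℕ) : Type := EuclideanSpace ℝ (Fin d)

def unitCube (d : ℕ) : Set (Euc d) := {x | ∀ i, x i ∈ Set.Icc (0 : ℝ) 1}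

def IsOptAssign {d n : ℕ} (x h : Fin n → Euc d) (σ : Equiv.Perm (Fin n)) : Prop :=
  ∀ τ : Equiv.Perm (Fin n), ∑ i, ‖x i - h (σ i)‖ ^ 2 ≤ ∑ i, ‖x i - h (τ i)‖ ^ 2

open Function
open scoped RealInnerProductSpace

section Cost

variable {ι E : Type*} [Fintype ι] [NormedAddCommGroup E]

def assignCost (x h : ι → E) (σ : Equiv.Perm ι) : ℝ := ∑ i, ‖x i - h (σ i)‖ ^ 2

theorem assignCost_comp (x h : ι → E) (σ τ : Equiv.Perm ι) :
    assignCost (x ∘ τ) h σ = assignCost x h (σ * τ⁻¹) := by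
  rw [assignCost, assignCost, ← Equiv.sum_comp τ fun j => ‖x j - h ((σ * τ⁻¹) j)‖ ^ 2]
  simp

variable [InnerProductSpace ℝ E]

theorem assignCost_sub_assignCost (x h : ι → E) (σ τ : Equiv.Perm ι) :
    assignCost x h σ - assignCost x h τ = -2 * ∑ i, ⟪x i, h (σ i) - h (τ i)⟫ := by
  have hnorms : ∑ i, ‖h (σ i)‖ ^ 2 = ∑ i, ‖h (τ i)‖ ^ 2 := by
    rw [Equiv.sum_comp σ fun j => ‖h j‖ ^ 2, Equiv.sum_comp τ fun j => ‖h j‖ ^ 2]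
  simp only [assignCost, norm_sub_sq_real, inner_sub_right, Finset.sum_add_distrib,
    Finset.sum_sub_distrib, ← Finset.mul_sum, hnorms]
  ring

theorem addHaar_setOf_sum_inner_eq_zero [FiniteDimensional ℝ E] [MeasurableSpace E] [BorelSpace E]
    (μ : Measure (ι → E)) [μ.IsAddHaarMeasure] {a : ι → E} (ha : a ≠ 0) :
    μ {x | ∑ i, ⟪x i, a i⟫ = 0} = 0 := by
  classical
  let L : (ι → E) →ₗ[ℝ] ℝ := ∑ i, (innerₛₗ ℝ (a i)).comp (LinearMap.proj i)
  have hL : ∀ x, L x = ∑ i, ⟪x i, a i⟫ := fun x => by simp [L, real_inner_comm]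
  obtain ⟨i₀, hi₀⟩ := ne_iff.1 ha
  have hker : LinearMap.ker L ≠ ⊤ := by
    intro htop
    have hmem : Pi.single i₀ (a i₀) ∈ LinearMap.ker L := htop ▸ Submodule.mem_top
    rw [LinearMap.mem_ker, hL, Finset.sum_eq_single i₀ (fun j _ hj => by simp [hj]) (by simp)]
      at hmem
    exact hi₀ (by simpa using hmem)
  exact measure_mono_null (fun x hx => by simpa [hL] using hx) (Measure.addHaar_submodule μ _ hker)

theorem addHaar_setOf_assignCost_eq [FiniteDimensional ℝ E] [MeasurableSpace E] [BorelSpace E]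
    (μ : Measure (ι → E)) [μ.IsAddHaarMeasure] {h : ι → E} (hh : Injective h)
    {σ τ : Equiv.Perm ι} (hστ : σ ≠ τ) :
    μ {x | assignCost x h σ = assignCost x h τ} = 0 := by
  obtain ⟨i, hi⟩ := DFunLike.ne_iff.1 hστ
  have ha : (fun i => h (σ i) - h (τ i)) ≠ 0 :=
    ne_iff.2 ⟨i, sub_ne_zero.2 (hh.ne hi)⟩
  refine measure_mono_null (fun x (hx : assignCost x h σ = assignCost x h τ) => ?_)
    (addHaar_setOf_sum_inner_eq_zero μ ha)
  have hdiff := assignCost_sub_assignCost x h σ τ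
  rw [hx, sub_self] at hdiff
  show ∑ i, ⟪x i, h (σ i) - h (τ i)⟫ = 0
  linarith

theorem ae_injective_assignCost [FiniteDimensional ℝ E] [MeasurableSpace E] [BorelSpace E]
    (μ : Measure (ι → E)) [μ.IsAddHaarMeasure] {ν : Measure (ι → E)} (hν : ν ≪ μ)
    {h : ι → E} (hh : Injective h) :
    ∀ᵐ x ∂ν, Injective (assignCost x h) := by
  classical
  have hpair (σ τ : Equiv.Perm ι) : ∀ᵐ x ∂μ, assignCost x h σ = assignCost x h τ → σ = τ := by
    by_cases hστ : σ = τ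
    · exact ae_of_all _ fun _ _ => hστ
    · exact measure_mono_null (fun x hx => by simpa [hστ] using hx)
        (addHaar_setOf_assignCost_eq μ hh hστ)
  filter_upwards [hν.ae_le (ae_all_iff.2 fun σ => ae_all_iff.2 (hpair σ))] with x hx σ τ
  exact hx σ τ

end Cost

section Region

variable {ι E : Type*} [Fintype ι] [NormedAddCommGroup E]

def uniqueOptRegion (h : ι → E) (σ : Equiv.Perm ι) : Set (ι → E) :=
  {x | ∀ τ, τ ≠ σ → assignCost x h σ < assignCost x h τ}

theorem preimage_comp_uniqueOptRegion (h : ι → E) (σ τ : Equiv.Perm ι) :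
    (· ∘ τ) ⁻¹' uniqueOptRegion h σ = uniqueOptRegion h (σ * τ⁻¹) := by
  ext x
  simp only [uniqueOptRegion, Set.mem_preimage, Set.mem_ofPred_eq, assignCost_comp]
  constructor
  · intro hx ρ hρ
    simpa using hx (ρ * τ) (by simpa [eq_mul_inv_iff_mul_eq] using hρ)
  · intro hx ρ hρ
    exact hx (ρ * τ⁻¹) (by simpa using hρ)

theorem measurableSet_uniqueOptRegion [MeasurableSpace E] [OpensMeasurableSpace (ι → E)]
    (h : ι → E) (σ : Equiv.Perm ι) : MeasurableSet (uniqueOptRegion h σ) := by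
  have hcont (ρ : Equiv.Perm ι) : Continuous fun x : ι → E => assignCost x h ρ := by
    unfold assignCost; fun_prop
  simp only [uniqueOptRegion, Set.ofPred_forall]
  exact MeasurableSet.iInter fun τ => MeasurableSet.iInter fun _ =>
    measurableSet_lt (hcont σ).measurable (hcont τ).measurable

theorem pairwise_disjoint_uniqueOptRegion (h : ι → E) :
    Pairwise (Disjoint on uniqueOptRegion h) := fun σ τ hστ =>
  Set.disjoint_left.2 fun _ hσ hτ => (hσ τ hστ.symm).asymm (hτ σ hστ)

theorem mem_uniqueOptRegion_iff {x h : ι → E} (hx : Injective (assignCost x h))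
    {σ' : Equiv.Perm ι} (hopt : ∀ τ, assignCost x h σ' ≤ assignCost x h τ) (σ : Equiv.Perm ι) :
    x ∈ uniqueOptRegion h σ ↔ σ' = σ := by
  constructor
  · intro hσ
    by_contra hne
    exact (hσ σ' hne).not_ge (hopt σ)
  · rintro rfl τ hτ
    exact (hopt τ).lt_of_ne fun e => hτ (hx e).symm

theorem exists_mem_uniqueOptRegion {x h : ι → E} (hx : Injective (assignCost x h)) :
    ∃ σ, x ∈ uniqueOptRegion h σ := by
  classical
  obtain ⟨σ, -, hσ⟩ := Finset.exists_min_image Finset.univ (assignCost x h) Finset.univ_nonempty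
  exact ⟨σ, (mem_uniqueOptRegion_iff hx (fun τ => hσ τ (Finset.mem_univ τ)) σ).2 rfl⟩

end Region

theorem measure_eq_inv_card_of_ae_partition {α ι : Type*} [MeasurableSpace α] [Fintype ι]
    {ν : Measure α} [IsProbabilityMeasure ν] {A : ι → Set α} (hA : ∀ i, MeasurableSet (A i))
    (hdisj : Pairwise (Disjoint on A)) (hcover : ∀ᵐ x ∂ν, ∃ i, x ∈ A i)
    (hequal : ∀ i j, ν (A i) = ν (A j)) (i : ι) :
    ν (A i) = (Fintype.card ι : ℝ≥0∞)⁻¹ := by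
  have hunion : ν (⋃ j, A j) = 1 := by
    rw [← measure_univ (μ := ν),
      ← ae_mem_iff_measure_eq (MeasurableSet.iUnion hA).nullMeasurableSet]
    simpa only [Set.mem_iUnion] using hcover
  rw [measure_iUnion hdisj hA, tsum_fintype, Finset.sum_congr rfl fun j _ => hequal j i,
    Finset.sum_const, Finset.card_univ, nsmul_eq_mul] at hunion
  exact ENNReal.eq_inv_of_mul_eq_one_left (by rwa [mul_comm] at hunion)

theorem measurePreserving_comp_perm {ι α : Type*} [Fintype ι] [MeasurableSpace α]
    (μ : Measure α) [SigmaFinite μ] (τ : Equiv.Perm ι) :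
    MeasurePreserving (· ∘ τ) (Measure.pi fun _ : ι => μ) (Measure.pi fun _ : ι => μ) :=
  -- `MeasurableEquiv.arrowCongr' τ.symm (.refl α)` is `(· ∘ τ)` by definition
  measurePreserving_arrowCongr' (fun _ => μ) (fun _ => μ) τ.symm (MeasurableEquiv.refl α)
    fun _ => MeasurePreserving.id μ

universe u in
theorem absolutelyContinuous_pi_fin :
    ∀ {n : ℕ} {α : Fin n → Type u} [∀ i, MeasurableSpace (α i)] {μ ν : ∀ i, Measure (α i)}
      [∀ i, SigmaFinite (μ i)] [∀ i, SigmaFinite (ν i)],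
      (∀ i, μ i ≪ ν i) → Measure.pi μ ≪ Measure.pi ν
  | 0, _, _, _, _, _, _, _ => by rw [Measure.pi_of_empty, Measure.pi_of_empty]
  | n + 1, α, _, μ, ν, _, _, h => by
    rw [← (measurePreserving_piFinSuccAbove μ 0).symm.map_eq,
      ← (measurePreserving_piFinSuccAbove ν 0).symm.map_eq]
    exact ((h 0).prod (absolutelyContinuous_pi_fin fun i => h _)).map
      (MeasurableEquiv.measurable _)

universe u in
theorem absolutelyContinuous_pi {ι : Type*} [Fintype ι] {α : ι → Type u}
    [∀ i, MeasurableSpace (α i)] {μ ν : ∀ i, Measure (α i)} [∀ i, SigmaFinite (μ i)]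
    [∀ i, SigmaFinite (ν i)] (h : ∀ i, μ i ≪ ν i) : Measure.pi μ ≪ Measure.pi ν := by
  let e := (Fintype.equivFin ι).symm
  rw [← Measure.pi_map_piCongrLeft e μ, ← Measure.pi_map_piCongrLeft e ν]
  exact (absolutelyContinuous_pi_fin fun i => h (e i)).map (MeasurableEquiv.measurable _)

theorem measure_uniqueOptRegion {ι E : Type*} [Fintype ι] [NormedAddCommGroup E]
    [InnerProductSpace ℝ E] [FiniteDimensional ℝ E] [MeasurableSpace E] [BorelSpace E]
    (μ : Measure (ι → E)) [μ.IsAddHaarMeasure] {ν : Measure (ι → E)} [IsProbabilityMeasure ν]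
    (hν : ν ≪ μ) (hperm : ∀ τ : Equiv.Perm ι, MeasurePreserving (· ∘ τ) ν ν)
    {h : ι → E} (hh : Injective h) (σ : Equiv.Perm ι) :
    ν (uniqueOptRegion h σ) = ((Fintype.card ι).factorial : ℝ≥0∞)⁻¹ := by
  classical
  rw [← Fintype.card_perm]
  refine measure_eq_inv_card_of_ae_partition (measurableSet_uniqueOptRegion h)
    (pairwise_disjoint_uniqueOptRegion h) ?_ (fun σ₁ σ₂ => ?_) σ
  · filter_upwards [ae_injective_assignCost μ hν hh] with x hx
      using exists_mem_uniqueOptRegion hx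
  · have hσ₁ : σ₁ = σ₂ * (σ₁⁻¹ * σ₂)⁻¹ := by group
    rw [hσ₁, ← preimage_comp_uniqueOptRegion,
      (hperm _).measure_preimage (measurableSet_uniqueOptRegion h σ₂).nullMeasurableSet]

theorem stmt1_general
    {d n : ℕ} {Ω : Type*} [MeasurableSpace Ω] (P : Measure Ω) [IsProbabilityMeasure P]
    (μ : Measure (Euc d)) [IsProbabilityMeasure μ] (hac : μ ≪ volume)
    (X : Fin n → Ω → Euc d) (hXmeas : ∀ i, Measurable (X i))
    (hindep : iIndepFun X P)
    (hlaw : ∀ i, Measure.map (X i) P = μ)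
    (h : Fin n → Euc d) (hinj : Function.Injective h)
    (σhat : Ω → Equiv.Perm (Fin n))
    (hopt : ∀ᵐ ω ∂P, IsOptAssign (fun i => X i ω) h (σhat ω)) :
    ∀ σ₀ : Equiv.Perm (Fin n), P {ω | σhat ω = σ₀} = (Nat.factorial n : ℝ≥0∞)⁻¹ := by
  intro σ₀
  set Y : Ω → Fin n → Euc d := fun ω i => X i ω
  have hYmeas : Measurable Y := measurable_pi_lambda _ hXmeas
  have hlawY : P.map Y = Measure.pi fun _ => μ := by
    simpa only [hlaw] using hindep.map_fun_eq_pi_map fun i => (hXmeas i).aemeasurable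
  have hpi_ac : (Measure.pi fun _ => μ) ≪ (volume : Measure (Fin n → Euc d)) :=
    absolutelyContinuous_pi fun _ => hac
  have hties : ∀ᵐ ω ∂P, Injective (assignCost (Y ω) h) := by
    refine ae_of_ae_map (p := fun x => Injective (assignCost x h)) hYmeas.aemeasurable ?_
    rw [hlawY]
    exact ae_injective_assignCost volume hpi_ac hinj
  have hevent : {ω | σhat ω = σ₀} =ᵐ[P] Y ⁻¹' uniqueOptRegion h σ₀ := by
    filter_upwards [hopt, hties] with ω hωopt hωinj
    exact propext (mem_uniqueOptRegion_iff hωinj hωopt σ₀).symm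
  rw [measure_congr hevent, ← Measure.map_apply hYmeas (measurableSet_uniqueOptRegion h σ₀),
    hlawY, measure_uniqueOptRegion volume hpi_ac (measurePreserving_comp_perm μ) hinj,
    Fintype.card_fin]

/-- If `X_1,…,X_n` are i.i.d. with law `μ` absolutely continuous w.r.t. Lebesgue measure,
`h_1,…,h_n` are distinct points of `[0,1]^d`, and `σ̂` is a measurable random permutation which
is almost surely an optimal assignment of the sample to the grid, then `σ̂` is uniformly
distributed over the `n!` permutations of `{1,…,n}`; in particular its law does not depend
on `μ`. -/
theorem stmt1
    {d n : ℕ} {Ω : Type*} [MeasurableSpace Ω] (P : Measure Ω) [IsProbabilityMeasure P]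
    (μ : Measure (Euc d)) [IsProbabilityMeasure μ] (hac : μ ≪ volume)
    (X : Fin n → Ω → Euc d) (hXmeas : ∀ i, Measurable (X i))
    (hindep : iIndepFun X P)
    (hlaw : ∀ i, Measure.map (X i) P = μ)
    (h : Fin n → Euc d) (hcube : ∀ i, h i ∈ unitCube d) (hinj : Function.Injective h)
    (σhat : Ω → Equiv.Perm (Fin n))
    (hσmeas : ∀ σ₀ : Equiv.Perm (Fin n), MeasurableSet {ω | σhat ω = σ₀})
    (hopt : ∀ᵐ ω ∂P, IsOptAssign (fun i => X i ω) h (σhat ω)) :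
    ∀ σ₀ : Equiv.Perm (Fin n), P {ω | σhat ω = σ₀} = (Nat.factorial n : ℝ≥0∞)⁻¹ :=
  stmt1_general P μ hac X hXmeas hindep hlaw h hinj σhat hopt

end
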